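/- arXiv:math/0603608 — 4 statements merged into one kernel-verified Lean document; each statement's English description precedes it below -/
import Mathlib

section
/- Let φ be the substitution φ(i) = 0^t(i+1) for i < m-1, φ(m-1) = 0^s with t ≥ s ≥ 1, and u_β its fixed point. If w is a factor of u_β whose first and last letters are nonzero, then there exists a factor w' of u_β with 0^t · w = φ(w'). -/
/-- The canonical substitution associated with a simple Parry number `β` with
`d_β(1) = t t ⋯ t s` (`m` digits): `φ(i) = 0^t (i+1)` for `i ≤ m-2` and
`φ(m-1) = 0^s`.  Letters are encoded as natural numbers `0, …, m-1`. -/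
def phi (m t s : ℕ) : ℕ → List ℕ := fun a =>
  if a = m - 1 then List.replicate s 0 else List.replicate t 0 ++ [a + 1]

/-- Application of a morphism to a finite word. -/
def applyMorph (f : ℕ → List ℕ) (l : List ℕ) : List ℕ := l.flatMap f

/-- `w` is a factor of the fixed point `u_β = lim φⁿ(0)` of the substitution,
i.e. `w` is a factor of some `φⁿ(0)`. -/
def inLang (f : ℕ → List ℕ) (w : List ℕ) : Prop :=
  ∃ k : ℕ, w <:+: (applyMorph f)^[k] [0]

/-! In `φ(v)` every nonzero letter is the last letter of a block `φ(a) = 0^t (a+1)`. Hence the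
first letter of `w` closes a block `φ(a)` whose `0^t` precedes `w`, and the last letter of `w`
closes another block, so `0^t w` is a union of consecutive blocks of `φ(v)`. -/

open List

@[simp]
lemma applyMorph_nil (f : ℕ → List ℕ) : applyMorph f [] = [] := rfl

@[simp]
lemma applyMorph_cons (f : ℕ → List ℕ) (a : ℕ) (v : List ℕ) :
    applyMorph f (a :: v) = f a ++ applyMorph f v := rfl

@[simp]
lemma applyMorph_append (f : ℕ → List ℕ) (v₁ v₂ : List ℕ) :
    applyMorph f (v₁ ++ v₂) = applyMorph f v₁ ++ applyMorph f v₂ :=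
  flatMap_append

lemma eq_nil_of_eq_append_cons {l x z : List ℕ} {b : ℕ} (hl : ∀ y ∈ l.dropLast, y = 0)
    (h : l = x ++ b :: z) (hb : b ≠ 0) : z = [] := by
  by_contra hz
  apply hb
  apply hl
  rw [h, dropLast_append_of_ne_nil (cons_ne_nil _ _), dropLast_cons_of_ne_nil hz]
  simp

lemma exists_block_of_append_cons {f : ℕ → List ℕ} (hf : ∀ a, ∀ y ∈ (f a).dropLast, y = 0)
    {b : ℕ} (hb : b ≠ 0) {y : List ℕ} :
    ∀ {x v : List ℕ}, x ++ b :: y = applyMorph f v →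
      ∃ v₁ a v₂ x', v = v₁ ++ a :: v₂ ∧ x = applyMorph f v₁ ++ x' ∧
        f a = x' ++ [b] ∧ y = applyMorph f v₂ := by
  intro x v
  induction v generalizing x with
  | nil => simp
  | cons a v ih =>
    intro h
    rw [applyMorph_cons] at h
    rcases append_eq_append_iff.mp h with ⟨z, hfa, hy⟩ | ⟨x', rfl, hv⟩
    · rcases cons_eq_append_iff.mp hy with ⟨rfl, hv⟩ | ⟨z', rfl, rfl⟩
      · obtain ⟨v₁, a', v₂, x', rfl, hx, ha', rfl⟩ := ih (x := []) hv.symm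
        exact ⟨a :: v₁, a', v₂, x', rfl, by simp [hfa, hx], ha', rfl⟩
      · obtain rfl := eq_nil_of_eq_append_cons (hf a) hfa hb
        exact ⟨[], a, v, x, rfl, rfl, hfa, rfl⟩
    · obtain ⟨v₁, a', v₂, x'', rfl, rfl, ha', rfl⟩ := ih hv.symm
      exact ⟨a :: v₁, a', v₂, x'', rfl, by simp, ha', rfl⟩

lemma exists_prefix_applyMorph_eq {f : ℕ → List ℕ}
    (hf : ∀ a, ∀ y ∈ (f a).dropLast, y = 0) {w q v : List ℕ}
    (hw : w = [] ∨ ∃ L c, c ≠ 0 ∧ w = L ++ [c]) (h : w ++ q = applyMorph f v) :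
    ∃ v', v' <+: v ∧ w = applyMorph f v' := by
  rcases hw with rfl | ⟨L, c, hc, rfl⟩
  · exact ⟨[], nil_prefix, rfl⟩
  · rw [append_assoc, singleton_append] at h
    obtain ⟨v₁, a, v₂, x, rfl, rfl, ha, -⟩ := exists_block_of_append_cons hf hc h
    exact ⟨v₁ ++ [a], ⟨v₂, by simp⟩, by simp [ha]⟩

section Phi

variable {m t s : ℕ}

lemma phi_dropLast_eq_zero (a : ℕ) : ∀ y ∈ (phi m t s a).dropLast, y = 0 := by
  unfold phi
  split_ifs <;> simp

lemma phi_eq_of_eq_append_singleton {a b : ℕ} {x : List ℕ} (h : phi m t s a = x ++ [b])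
    (hb : b ≠ 0) : phi m t s a = replicate t 0 ++ [b] := by
  unfold phi at h ⊢
  split_ifs at h ⊢ with ha
  · exact absurd (eq_of_mem_replicate (h ▸ mem_append_right x (mem_singleton_self b))) hb
  · rw [← append_inj_right' h rfl]

lemma exists_infix_replicate_append_eq_applyMorph_phi {p w q v : List ℕ}
    (h : p ++ w ++ q = applyMorph (phi m t s) v) (hne : w ≠ [])
    (hh : w.head hne ≠ 0) (hl : w.getLast hne ≠ 0) :
    ∃ v', v' <:+: v ∧ replicate t 0 ++ w = applyMorph (phi m t s) v' := by
  obtain ⟨b, w', rfl⟩ := exists_cons_of_ne_nil hne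
  rw [head_cons] at hh
  rw [append_assoc, cons_append] at h
  obtain ⟨v₁, a, v₂, x, rfl, -, ha, hv₂⟩ :=
    exists_block_of_append_cons phi_dropLast_eq_zero hh h
  have hw' : w' = [] ∨ ∃ L c, c ≠ 0 ∧ w' = L ++ [c] := by
    rcases eq_nil_or_concat w' with rfl | ⟨L, c, rfl⟩
    · exact Or.inl rfl
    · exact Or.inr ⟨L, c, by simpa using hl, by simp⟩
  obtain ⟨v₃, ⟨v₄, rfl⟩, rfl⟩ := exists_prefix_applyMorph_eq phi_dropLast_eq_zero hw' hv₂
  refine ⟨a :: v₃, ⟨v₁, v₄, by simp⟩, ?_⟩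
  simp [phi_eq_of_eq_append_singleton ha hh]

end Phi

theorem stmt6_general (m t s : ℕ)
    (w : List ℕ) (hw : inLang (phi m t s) w) (hne : w ≠ [])
    (hh : w.head hne ≠ 0) (hl : w.getLast hne ≠ 0) :
    ∃ w' : List ℕ, inLang (phi m t s) w' ∧
      List.replicate t 0 ++ w = applyMorph (phi m t s) w' := by
  obtain ⟨k, hk⟩ := hw
  cases k with
  | zero => exact absurd (by simpa using hk.subset (head_mem hne)) hh
  | succ k =>
    rw [Function.iterate_succ_apply'] at hk
    obtain ⟨p, q, hpq⟩ := hk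
    obtain ⟨v', hv', heq⟩ := exists_infix_replicate_append_eq_applyMorph_phi hpq hne hh hl
    exact ⟨v', ⟨k, hv'⟩, heq⟩

/-- If `w` is a factor of `u_β` whose first and last letters are nonzero, then
there exists a factor `w'` of `u_β` with `0^t · w = φ(w')`. -/
theorem stmt6 (m t s : ℕ) (hm : 1 ≤ m) (hs : 1 ≤ s) (hts : s ≤ t)
    (w : List ℕ) (hw : inLang (phi m t s) w) (hne : w ≠ [])
    (hh : w.head hne ≠ 0) (hl : w.getLast hne ≠ 0) :
    ∃ w' : List ℕ, inLang (phi m t s) w' ∧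
      List.replicate t 0 ++ w = applyMorph (phi m t s) w' :=
  stmt6_general m t s w hw hne hh hl
end

section
/- Let φ be the substitution φ(i) = 0^t(i+1) for i < m-1, φ(m-1) = 0^s with t ≥ s ≥ 1, and u_β its fixed point. For a palindromic factor p of u_β and a letter a ≠ m-1, the word a·p·a is a factor of u_β if and only if (a+1)·φ(p)·0^t·(a+1) is a factor of u_β. -/
/-!
The images `φ(i)` are nonempty and are told apart by their last letters (`0` for `m - 1`,
`i + 1` otherwise), so `φ` is injective on words: a word is decoded from the right. Every
nonzero letter `b` of `φ(v)` ends the image `0^t b` of the letter `b - 1` of `v`. Hence an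
occurrence of `(a+1)·φ(p)·0^t·(a+1)` in `φ(u)` comes from an occurrence of `a·p·a` in `u`;
conversely `φ(a·p·a) = 0^t·(a+1)·φ(p)·0^t·(a+1)`.
-/

open List Function

theorem List.flatMap_injective_of_getLast?_injective {α β : Type*} {f : α → List β}
    (hne : ∀ a, f a ≠ []) (hlast : Injective fun a => (f a).getLast?) :
    Injective fun l : List α => l.flatMap f := by
  intro x
  induction x using List.reverseRecOn with
  | nil =>
    intro y h
    rcases y.eq_nil_or_concat' with rfl | ⟨y, d, rfl⟩
    · rfl
    · simp [hne] at h
  | append_singleton x c ih =>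
    intro y h
    rcases y.eq_nil_or_concat' with rfl | ⟨y, d, rfl⟩
    · simp [hne] at h
    · simp only [flatMap_append, flatMap_singleton] at h
      have hcd : c = d := hlast <| by
        simpa [getLast?_append_of_ne_nil _ (hne _)] using congrArg getLast? h
      subst hcd
      rw [ih (append_cancel_right h)]

theorem List.flatMap_eq_append_cons {α β : Type*} {f : α → List β} {v : List α}
    {l r : List β} {b : β} (h : v.flatMap f = l ++ b :: r) :
    ∃ v₁ c v₂ l' r', v = v₁ ++ c :: v₂ ∧ f c = l' ++ b :: r' ∧
      l = v₁.flatMap f ++ l' ∧ r = r' ++ v₂.flatMap f := by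
  induction v generalizing l with
  | nil => simp at h
  | cons c v ih =>
    rw [flatMap_cons, append_eq_append_iff] at h
    obtain ⟨l', rfl, h⟩ | ⟨l', hc, h⟩ := h
    · obtain ⟨v₁, d, v₂, l'', r', rfl, hd, rfl, rfl⟩ := ih h
      exact ⟨c :: v₁, d, v₂, l'', r', by simp, hd, by simp, rfl⟩
    · cases l' with
      | nil =>
        obtain ⟨v₁, d, v₂, l'', r', rfl, hd, hl, rfl⟩ := ih (l := []) h.symm
        refine ⟨c :: v₁, d, v₂, l'', r', rfl, hd, ?_, rfl⟩
        rw [flatMap_cons, append_assoc, ← hl, hc, append_nil, append_nil]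
      | cons x xs =>
        obtain ⟨rfl, rfl⟩ := cons_eq_cons.1 h
        exact ⟨[], c, v, l, xs, rfl, hc, by simp, rfl⟩

section Phi

variable {m t s : ℕ}

theorem phi_ne_nil (hs : s ≠ 0) (a : ℕ) : phi m t s a ≠ [] := by
  unfold phi; split <;> simp [hs]

theorem getLast?_phi (hs : s ≠ 0) (a : ℕ) :
    (phi m t s a).getLast? = some (if a = m - 1 then 0 else a + 1) := by
  unfold phi; split <;> simp [getLast?_replicate, hs]

theorem applyMorph_phi_injective (hs : s ≠ 0) : Injective (applyMorph (phi m t s)) :=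
  flatMap_injective_of_getLast?_injective (phi_ne_nil hs) fun a b h => by
    simp only [getLast?_phi hs, Option.some.injEq] at h
    split_ifs at h <;> omega

theorem phi_eq_append_cons_of_ne_zero {a b : ℕ} {l r : List ℕ} (hb : b ≠ 0)
    (h : phi m t s a = l ++ b :: r) :
    a ≠ m - 1 ∧ b = a + 1 ∧ l = replicate t 0 ∧ r = [] := by
  unfold phi at h
  split_ifs at h with ha
  · exact absurd (eq_of_mem_replicate (h ▸ by simp : b ∈ replicate s 0)) hb
  · rcases r.eq_nil_or_concat' with rfl | ⟨r, x, rfl⟩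
    · obtain ⟨rfl, hab⟩ := append_inj' h rfl
      exact ⟨ha, by simpa using hab.symm, rfl, rfl⟩
    · obtain ⟨h0, -⟩ := append_inj' (s₂ := l ++ b :: r) (t₂ := [x]) (h.trans (by simp)) rfl
      exact absurd (eq_of_mem_replicate (h0 ▸ by simp : b ∈ replicate t 0)) hb

theorem applyMorph_phi_eq_append_cons {v l r : List ℕ} {b : ℕ} (hb : b ≠ 0)
    (h : applyMorph (phi m t s) v = l ++ b :: r) :
    ∃ v₁ a v₂, v = v₁ ++ a :: v₂ ∧ b = a + 1 ∧
      l = applyMorph (phi m t s) v₁ ++ replicate t 0 ∧ r = applyMorph (phi m t s) v₂ := by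
  obtain ⟨v₁, a, v₂, l', r', rfl, ha, rfl, rfl⟩ := flatMap_eq_append_cons h
  obtain ⟨-, rfl, rfl, rfl⟩ := phi_eq_append_cons_of_ne_zero hb ha
  exact ⟨v₁, a, v₂, rfl, rfl, rfl, rfl⟩

end Phi

namespace inLang

variable {f : ℕ → List ℕ} {w : List ℕ}

theorem of_infix {w' : List ℕ} (h : inLang f w) (hw : w' <:+: w) : inLang f w' :=
  h.imp fun _ => hw.trans

theorem applyMorph (h : inLang f w) : inLang f (applyMorph f w) :=
  let ⟨k, hk⟩ := h
  ⟨k + 1, by rw [iterate_succ_apply']; exact hk.flatMap f⟩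

theorem exists_infix_applyMorph (h : inLang f w) (hw : 2 ≤ w.length) :
    ∃ u, inLang f u ∧ w <:+: _root_.applyMorph f u := by
  obtain ⟨_ | k, hk⟩ := h
  · simpa using hw.trans hk.length_le
  · rw [iterate_succ_apply'] at hk
    exact ⟨_, ⟨k, infix_rfl⟩, hk⟩

end inLang

theorem infix_of_infix_applyMorph_phi {m t s a : ℕ} {p u : List ℕ} (hs : s ≠ 0)
    (h : [a + 1] ++ (applyMorph (phi m t s) p ++ replicate t 0) ++ [a + 1] <:+:
      applyMorph (phi m t s) u) :
    [a] ++ p ++ [a] <:+: u := by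
  obtain ⟨l, r, h⟩ := h
  obtain ⟨v₁, b, v₂, rfl, hb, -, h₂⟩ := applyMorph_phi_eq_append_cons (Nat.succ_ne_zero a)
    (l := l) (r := applyMorph (phi m t s) p ++ replicate t 0 ++ (a + 1) :: r) (by rw [← h]; simp)
  obtain ⟨v₃, c, v₄, rfl, hc, h₃, -⟩ :=
    applyMorph_phi_eq_append_cons (Nat.succ_ne_zero a) h₂.symm
  obtain rfl : p = v₃ := applyMorph_phi_injective hs (append_cancel_right h₃)
  obtain ⟨rfl, rfl⟩ : b = a ∧ c = a := by omega
  exact ⟨v₁, v₄, by simp⟩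

theorem stmt7_general (m t s : ℕ) (hs : 1 ≤ s) (p : List ℕ) (a : ℕ) (ham : a ≠ m - 1) :
    inLang (phi m t s) ([a] ++ p ++ [a]) ↔
      inLang (phi m t s)
        ([a + 1] ++ (applyMorph (phi m t s) p ++ List.replicate t 0) ++ [a + 1]) := by
  constructor
  · intro h
    refine h.applyMorph.of_infix ⟨replicate t 0, [], ?_⟩
    simp [applyMorph, phi, ham]
  · intro h
    obtain ⟨u, hu, hinf⟩ := h.exists_infix_applyMorph (by simp only [length_append, length_singleton]; omega)
    exact hu.of_infix (infix_of_infix_applyMorph_phi (by omega) hinf)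

/-- For a palindromic factor `p` of `u_β` and a letter `a ≠ m-1`, the word
`a·p·a` is a factor of `u_β` iff `(a+1)·φ(p)·0^t·(a+1)` is a factor of `u_β`. -/
theorem stmt7 (m t s : ℕ) (hm : 1 ≤ m) (hs : 1 ≤ s) (hts : s ≤ t)
    (p : List ℕ) (hp : inLang (phi m t s) p) (hpal : p.reverse = p)
    (a : ℕ) (ha : a < m) (ham : a ≠ m - 1) :
    inLang (phi m t s) ([a] ++ p ++ [a]) ↔
      inLang (phi m t s)
        ([a + 1] ++ (applyMorph (phi m t s) p ++ List.replicate t 0) ++ [a + 1]) :=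
  stmt7_general m t s hs p a ham
end

section
/- Let φ be the substitution φ(i) = 0^t(i+1) for i < m-1, φ(m-1) = 0^s with t ≥ s ≥ 1. If p and q are palindromes with q a central factor of p (i.e., p = w·q·reverse(w) for some word w), then φ(q)·0^t is a central factor of φ(p)·0^t. -/
/-! The word `0^t` conjugates `reverse ∘ φ` into `φ` letter by letter, hence on all words; so
`φ(w q reverse(w)) 0^t = φ(w) (φ(q) 0^t) reverse(φ(w))`. -/

namespace List

variable {α β : Type*}

theorem append_flatMap_of_append_eq {f g : α → List β} {z : List β}
    (h : ∀ a, z ++ g a = f a ++ z) (u : List α) :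
    z ++ u.flatMap g = u.flatMap f ++ z := by
  induction u with
  | nil => simp
  | cons a v ih => rw [flatMap_cons, flatMap_cons, ← append_assoc, h a, append_assoc, ih, append_assoc]

theorem append_reverse_flatMap_of_append_reverse_eq {f : α → List β} {z : List β}
    (h : ∀ a, z ++ (f a).reverse = f a ++ z) (u : List α) :
    z ++ (u.flatMap f).reverse = u.reverse.flatMap f ++ z := by
  rw [reverse_flatMap]
  exact append_flatMap_of_append_eq h u.reverse

theorem flatMap_append_reverse_append_of_append_reverse_eq {f : α → List β} {z : List β}
    (h : ∀ a, z ++ (f a).reverse = f a ++ z) (w q : List α) :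
    (w ++ q ++ w.reverse).flatMap f ++ z
      = w.flatMap f ++ (q.flatMap f ++ z) ++ (w.flatMap f).reverse := by
  simp only [flatMap_append, append_assoc,
    ← append_reverse_flatMap_of_append_reverse_eq h w]

end List

theorem replicate_append_reverse_phi (m t s a : ℕ) :
    List.replicate t 0 ++ (phi m t s a).reverse = phi m t s a ++ List.replicate t 0 := by
  unfold phi
  split_ifs
  · simp only [List.reverse_replicate, ← List.replicate_add, Nat.add_comm]
  · simp

theorem stmt11_general (m t s : ℕ)
    (p q : List ℕ)
    (w : List ℕ) (hc : p = w ++ q ++ w.reverse) :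
    ∃ w' : List ℕ,
      applyMorph (phi m t s) p ++ List.replicate t 0
        = w' ++ (applyMorph (phi m t s) q ++ List.replicate t 0) ++ w'.reverse := by
  subst hc
  exact ⟨applyMorph (phi m t s) w,
    List.flatMap_append_reverse_append_of_append_reverse_eq (replicate_append_reverse_phi m t s) w q⟩

/-- If `p` and `q` are palindromes over the alphabet and `q` is a central
factor of `p` (i.e. `p = w·q·reverse(w)`), then `φ(q)·0^t` is a central factor
of `φ(p)·0^t`. -/
theorem stmt11 (m t s : ℕ) (hm : 1 ≤ m) (hs : 1 ≤ s) (hts : s ≤ t)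
    (p q : List ℕ) (hp : ∀ a ∈ p, a < m) (hq : ∀ a ∈ q, a < m)
    (hpp : p.reverse = p) (hqq : q.reverse = q)
    (w : List ℕ) (hc : p = w ++ q ++ w.reverse) :
    ∃ w' : List ℕ,
      applyMorph (phi m t s) p ++ List.replicate t 0
        = w' ++ (applyMorph (phi m t s) q ++ List.replicate t 0) ++ w'.reverse :=
  stmt11_general m t s p q w hc
end

section
/- Let φ be the substitution φ(i) = 0^t(i+1) for i < m-1, φ(m-1) = 0^s with t ≥ s ≥ 1 and t+s odd. If p₁ = w₁·(m-1)·reverse(w₁) is a palindrome with center the letter m-1, then φ(p₁)·0^t = w₂·0·reverse(w₂) where w₂ = φ(w₁)·0^{(s+t-1)/2}; i.e., φ(p₁)·0^t is a palindrome of odd length with center 0. -/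
/-!
Every image `φ(a)` is conjugate to its reverse by `0^t`: `φ(a)·0^t = 0^t·reverse(φ(a))`.
Multiplying these conjugations along a word gives `φ(reverse w)·0^t = 0^t·reverse(φ(w))`, so
`φ(p₁)·0^t = φ(w₁)·0^{s+t}·reverse(φ(w₁))`, and `0^{s+t}` is `0^k·0·0^k` because `s + t` is odd.
-/

theorem List.flatMap_reverse_append_of_conj {α β : Type*} {f : α → List β} {z : List β}
    (hf : ∀ a, f a ++ z = z ++ (f a).reverse) (l : List α) :
    l.reverse.flatMap f ++ z = z ++ (l.flatMap f).reverse := by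
  induction l with
  | nil => simp
  | cons a l ih =>
    simp only [List.reverse_cons, List.flatMap_append, List.flatMap_cons, List.flatMap_nil,
      List.append_nil, List.reverse_append, List.append_assoc, hf]
    rw [← List.append_assoc, ih, List.append_assoc]

theorem List.replicate_eq_append_singleton_append {α : Type*} (a : α) {n : ℕ} (hn : Odd n) :
    List.replicate n a
      = List.replicate ((n - 1) / 2) a ++ [a] ++ List.replicate ((n - 1) / 2) a := by
  obtain ⟨k, rfl⟩ := hn
  rw [List.append_assoc, List.singleton_append, ← List.replicate_succ, ← List.replicate_add]
  congr 1
  omega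

theorem phi_append_replicate (m t s a : ℕ) :
    phi m t s a ++ List.replicate t 0 = List.replicate t 0 ++ (phi m t s a).reverse := by
  unfold phi
  split
  · rw [List.reverse_replicate, ← List.replicate_add, ← List.replicate_add, Nat.add_comm]
  · simp

theorem applyMorph_phi_reverse_append_replicate (m t s : ℕ) (w : List ℕ) :
    applyMorph (phi m t s) w.reverse ++ List.replicate t 0
      = List.replicate t 0 ++ (applyMorph (phi m t s) w).reverse :=
  List.flatMap_reverse_append_of_conj (phi_append_replicate m t s) w

theorem stmt14_general (m t s : ℕ) (hodd : Odd (t + s)) (w₁ : List ℕ) :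
    applyMorph (phi m t s) (w₁ ++ [m - 1] ++ w₁.reverse) ++ List.replicate t 0
      = (applyMorph (phi m t s) w₁ ++ List.replicate ((s + t - 1) / 2) 0) ++ [0]
          ++ (applyMorph (phi m t s) w₁
              ++ List.replicate ((s + t - 1) / 2) 0).reverse := by
  have hcenter : applyMorph (phi m t s) [m - 1] = List.replicate s 0 := by
    simp [applyMorph, phi]
  have hsplit := List.replicate_eq_append_singleton_append 0 (add_comm t s ▸ hodd)
  calc applyMorph (phi m t s) (w₁ ++ [m - 1] ++ w₁.reverse) ++ List.replicate t 0
      = applyMorph (phi m t s) w₁ ++ List.replicate s 0 ++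
          (applyMorph (phi m t s) w₁.reverse ++ List.replicate t 0) := by
        simp only [applyMorph, List.flatMap_append] at hcenter ⊢
        rw [hcenter, List.append_assoc]
    _ = applyMorph (phi m t s) w₁ ++ List.replicate (s + t) 0 ++
          (applyMorph (phi m t s) w₁).reverse := by
        rw [applyMorph_phi_reverse_append_replicate, List.replicate_add]
        simp only [List.append_assoc]
    _ = _ := by
        rw [hsplit]
        simp only [List.reverse_append, List.reverse_replicate, List.append_assoc]

/-- For `t + s` odd: if `p₁ = w₁·(m-1)·reverse(w₁)` is a palindrome with
center the letter `m-1`, then `φ(p₁)·0^t = w₂·0·reverse(w₂)` with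
`w₂ = φ(w₁)·0^{(s+t-1)/2}`. -/
theorem stmt14 (m t s : ℕ) (hm : 1 ≤ m) (hs : 1 ≤ s) (hts : s ≤ t)
    (hodd : Odd (t + s)) (w₁ : List ℕ) (hw : ∀ x ∈ w₁, x < m) :
    applyMorph (phi m t s) (w₁ ++ [m - 1] ++ w₁.reverse) ++ List.replicate t 0
      = (applyMorph (phi m t s) w₁ ++ List.replicate ((s + t - 1) / 2) 0) ++ [0]
          ++ (applyMorph (phi m t s) w₁
              ++ List.replicate ((s + t - 1) / 2) 0).reverse :=
  stmt14_general m t s hodd w₁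
end
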